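/- arXiv:1203.5809 — 2 statements merged into one kernel-verified Lean document; each statement's English description precedes it below -/
import Mathlib

section
/- Under the assumptions of the rare-event Lyapunov estimate (1_{Ω_n} V(Y_n) ≤ e^{ρ(t_n - t_{n-1})} V(Y_{n-1}) + 1_{Ω_n} Z_n with E[1_{Ω_n}|Z_n|] < ∞ for all n ≥ 1), the probability of the complement of Ω_n satisfies P[(Ω_n)^c] ≤ Σ_{k=0}^{n-1} ( e^{ρ(t_k - t_0)} E[V(Y_0)] + Σ_{l=1}^{k} e^{ρ(t_k - t_l)} E[1_{Ω_l} Z_l] ) / ζ(t_{k+1} - t_k) for all n ≥ 0. -/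
open MeasureTheory ENNReal

/-- The event that `V(Y_k) ≤ ζ(t_{k+1} - t_k)` holds for all `k ∈ {0, …, n-1}`
(for `n = 0` this is the whole space). -/
def rareEvent {Ω E : Type*} (V : E → ℝ) (Y : ℕ → Ω → E) (ζ : ℝ → ℝ≥0∞)
    (t : ℕ → ℝ) (n : ℕ) : Set Ω :=
  ⋂ k ∈ Finset.range n, {ω | ENNReal.ofReal (V (Y k ω)) ≤ ζ (t (k + 1) - t k)}

/-!
Since `Ω_{k+1} ⊆ Ω_k`, the factor `V(Y_k)` on the right of the Lyapunov inequality may be replaced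
by `1_{Ω_k} V(Y_k)`, so `u_k := E[1_{Ω_k} V(Y_k)]` satisfies
`u_{k+1} ≤ e^{ρ(t_{k+1}-t_k)} u_k + E[1_{Ω_{k+1}} Z_{k+1}]`, and a discrete Grönwall argument
bounds `u_k` by the `k`-th numerator. The complement of `Ω_n` is covered by the first-exit events
`Ω_k \ Ω_{k+1} ⊆ Ω_k ∩ {V(Y_k) > ζ(t_{k+1} - t_k)}`, `k < n`, and Markov's inequality bounds
the probability of each of them by `u_k / ζ(t_{k+1} - t_k)`.
-/

section General

variable {Ω : Type*} [MeasurableSpace Ω]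

theorem measureReal_compl_le_sum_diff (μ : Measure Ω) [IsFiniteMeasure μ] {A : ℕ → Set Ω}
    (h0 : A 0 = Set.univ) (n : ℕ) :
    μ.real (A n)ᶜ ≤ ∑ k ∈ Finset.range n, μ.real (A k \ A (k + 1)) := by
  induction n with
  | zero => simp [h0]
  | succ n ih =>
    have hcover : (A (n + 1))ᶜ ⊆ (A n)ᶜ ∪ (A n \ A (n + 1)) := fun ω hω => by
      by_cases hn : ω ∈ A n
      exacts [Or.inr ⟨hn, hω⟩, Or.inl hn]
    calc μ.real (A (n + 1))ᶜ
        ≤ μ.real ((A n)ᶜ ∪ (A n \ A (n + 1))) := measureReal_mono hcover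
      _ ≤ μ.real (A n)ᶜ + μ.real (A n \ A (n + 1)) := measureReal_union_le _ _
      _ ≤ _ := by rw [Finset.sum_range_succ]; gcongr

/-- Markov's inequality with an extended-valued threshold; for `c = ∞` both sides vanish. -/
theorem measureReal_le_integral_div_toReal {μ : Measure Ω} {f : Ω → ℝ} (hf : 0 ≤ f)
    (hfi : Integrable f μ) {c : ℝ≥0∞} (hc : c ≠ 0) {s : Set Ω}
    (hs : ∀ ω ∈ s, c < ENNReal.ofReal (f ω)) :
    μ.real s ≤ (∫ ω, f ω ∂μ) / c.toReal := by
  rcases eq_or_ne c ∞ with rfl | hc_top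
  · have : s = ∅ := Set.eq_empty_of_forall_notMem fun ω hω => not_top_lt (hs ω hω)
    simp [this]
  have hc_pos : 0 < c.toReal := ENNReal.toReal_pos hc hc_top
  have hsub : s ⊆ {ω | c.toReal ≤ f ω} := fun ω hω =>
    (toReal_lt_of_lt_ofReal (hs ω hω)).le
  rw [le_div_iff₀' hc_pos]
  calc c.toReal * μ.real s ≤ c.toReal * μ.real {ω | c.toReal ≤ f ω} := by
        gcongr
        exact (hfi.measure_ge_lt_top hc_pos).ne
    _ ≤ ∫ ω, f ω ∂μ := mul_meas_ge_le_integral_of_nonneg (.of_forall hf) hfi _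

end General

theorem le_exp_mul_add_sum_of_succ_le {ρ : ℝ} {t u b : ℕ → ℝ}
    (h : ∀ k, u (k + 1) ≤ Real.exp (ρ * (t (k + 1) - t k)) * u k + b (k + 1)) (k : ℕ) :
    u k ≤ Real.exp (ρ * (t k - t 0)) * u 0
      + ∑ l ∈ Finset.Icc 1 k, Real.exp (ρ * (t k - t l)) * b l := by
  have hexp : ∀ x y z : ℝ, Real.exp (ρ * (x - y)) * Real.exp (ρ * (y - z))
      = Real.exp (ρ * (x - z)) := fun x y z => by rw [← Real.exp_add]; ring_nf
  induction k with
  | zero => simp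
  | succ k ih =>
    calc u (k + 1) ≤ Real.exp (ρ * (t (k + 1) - t k)) * u k + b (k + 1) := h k
      _ ≤ Real.exp (ρ * (t (k + 1) - t k)) * (Real.exp (ρ * (t k - t 0)) * u 0
            + ∑ l ∈ Finset.Icc 1 k, Real.exp (ρ * (t k - t l)) * b l) + b (k + 1) := by
        gcongr
      _ = _ := by
        simp only [Finset.sum_Icc_succ_top (Nat.le_add_left 1 k), mul_add, Finset.mul_sum,
          ← mul_assoc, hexp, sub_self, mul_zero, Real.exp_zero, one_mul]
        ring

section RareEvent

variable {Ω E : Type*} {V : E → ℝ} {Y : ℕ → Ω → E} {ζ : ℝ → ℝ≥0∞} {t : ℕ → ℝ}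

@[simp]
theorem rareEvent_zero : rareEvent V Y ζ t 0 = Set.univ := by
  simp [rareEvent]

theorem rareEvent_succ (n : ℕ) :
    rareEvent V Y ζ t (n + 1)
      = rareEvent V Y ζ t n ∩ {ω | ENNReal.ofReal (V (Y n ω)) ≤ ζ (t (n + 1) - t n)} := by
  simp only [rareEvent, Finset.range_add_one, Finset.set_biInter_insert, Set.inter_comm]

theorem rareEvent_succ_subset (n : ℕ) : rareEvent V Y ζ t (n + 1) ⊆ rareEvent V Y ζ t n := by
  rw [rareEvent_succ]
  exact Set.inter_subset_left

theorem lt_of_mem_rareEvent_diff_succ {n : ℕ} {ω : Ω}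
    (hω : ω ∈ rareEvent V Y ζ t n \ rareEvent V Y ζ t (n + 1)) :
    ζ (t (n + 1) - t n) < ENNReal.ofReal (V (Y n ω)) := by
  rw [rareEvent_succ] at hω
  exact not_le.mp fun h => hω.2 ⟨hω.1, h⟩

theorem measurableSet_rareEvent [MeasurableSpace Ω] [MeasurableSpace E] (hV : Measurable V)
    (hY : ∀ n, Measurable (Y n)) (n : ℕ) : MeasurableSet (rareEvent V Y ζ t n) :=
  Finset.measurableSet_biInter _ fun k _ =>
    measurableSet_le (ENNReal.measurable_ofReal.comp (hV.comp (hY k))) measurable_const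

end RareEvent

section Lyapunov

theorem indicator_one_nonneg {Ω : Type*} (s : Set Ω) (ω : Ω) :
    0 ≤ s.indicator (fun _ => (1 : ℝ)) ω :=
  Set.indicator_nonneg (fun _ _ => zero_le_one) ω

variable {Ω E : Type*} {ρ : ℝ} {t : ℕ → ℝ} {ζ : ℝ → ℝ≥0∞} {V : E → ℝ}
  {Y : ℕ → Ω → E} {Z : ℕ → Ω → ℝ}

theorem indicator_mul_lyapunov_succ_le (hVnn : ∀ e, 0 ≤ V e) {n : ℕ} {ω : Ω}
    (hLyap : Set.indicator (rareEvent V Y ζ t (n + 1)) (fun _ => (1 : ℝ)) ω * V (Y (n + 1) ω)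
      ≤ Real.exp (ρ * (t (n + 1) - t n)) * V (Y n ω)
        + Set.indicator (rareEvent V Y ζ t (n + 1)) (fun _ => (1 : ℝ)) ω * Z (n + 1) ω) :
    Set.indicator (rareEvent V Y ζ t (n + 1)) (fun _ => (1 : ℝ)) ω * V (Y (n + 1) ω)
      ≤ Real.exp (ρ * (t (n + 1) - t n))
          * (Set.indicator (rareEvent V Y ζ t n) (fun _ => (1 : ℝ)) ω * V (Y n ω))
        + Set.indicator (rareEvent V Y ζ t (n + 1)) (fun _ => (1 : ℝ)) ω * Z (n + 1) ω := by
  by_cases hω : ω ∈ rareEvent V Y ζ t (n + 1)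
  · have hω' := rareEvent_succ_subset n hω
    simpa [Set.indicator_of_mem hω, Set.indicator_of_mem hω'] using hLyap
  · simp only [Set.indicator_of_notMem hω, zero_mul, add_zero]
    exact mul_nonneg (Real.exp_pos _).le (mul_nonneg (indicator_one_nonneg _ ω) (hVnn _))

theorem integrable_indicator_mul_lyapunov [MeasurableSpace Ω] [MeasurableSpace E]
    {P : Measure Ω} (hV : Measurable V) (hVnn : ∀ e, 0 ≤ V e) (hY : ∀ n, Measurable (Y n))
    (hint0 : Integrable (fun ω => V (Y 0 ω)) P)
    (hZint : ∀ n, 1 ≤ n →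
      Integrable
        (fun ω => Set.indicator (rareEvent V Y ζ t n) (fun _ => (1 : ℝ)) ω * |Z n ω|) P)
    (hLyap : ∀ n ω,
      Set.indicator (rareEvent V Y ζ t (n + 1)) (fun _ => (1 : ℝ)) ω * V (Y (n + 1) ω)
        ≤ Real.exp (ρ * (t (n + 1) - t n)) * V (Y n ω)
          + Set.indicator (rareEvent V Y ζ t (n + 1)) (fun _ => (1 : ℝ)) ω * Z (n + 1) ω)
    (n : ℕ) :
    Integrable
      (fun ω => Set.indicator (rareEvent V Y ζ t n) (fun _ => (1 : ℝ)) ω * V (Y n ω)) P := by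
  induction n with
  | zero => simpa using hint0
  | succ n ih =>
    have hmeas : Measurable fun ω =>
        Set.indicator (rareEvent V Y ζ t (n + 1)) (fun _ => (1 : ℝ)) ω * V (Y (n + 1) ω) :=
      (measurable_const.indicator (measurableSet_rareEvent hV hY _)).mul (hV.comp (hY _))
    refine ((ih.const_mul (Real.exp (ρ * (t (n + 1) - t n)))).add (hZint (n + 1) n.succ_pos)).mono'
      hmeas.aestronglyMeasurable (.of_forall fun ω => ?_)
    rw [Real.norm_eq_abs, abs_of_nonneg (mul_nonneg (indicator_one_nonneg _ ω) (hVnn _))]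
    refine (indicator_mul_lyapunov_succ_le hVnn (hLyap n ω)).trans ?_
    exact add_le_add le_rfl (mul_le_mul_of_nonneg_left (le_abs_self _) (indicator_one_nonneg _ ω))

theorem integral_indicator_mul_lyapunov_succ_le [MeasurableSpace Ω] [MeasurableSpace E]
    {P : Measure Ω} (hV : Measurable V) (hVnn : ∀ e, 0 ≤ V e) (hY : ∀ n, Measurable (Y n))
    (hZ : ∀ n, Measurable (Z n)) (hint0 : Integrable (fun ω => V (Y 0 ω)) P)
    (hZint : ∀ n, 1 ≤ n →
      Integrable
        (fun ω => Set.indicator (rareEvent V Y ζ t n) (fun _ => (1 : ℝ)) ω * |Z n ω|) P)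
    (hLyap : ∀ n ω,
      Set.indicator (rareEvent V Y ζ t (n + 1)) (fun _ => (1 : ℝ)) ω * V (Y (n + 1) ω)
        ≤ Real.exp (ρ * (t (n + 1) - t n)) * V (Y n ω)
          + Set.indicator (rareEvent V Y ζ t (n + 1)) (fun _ => (1 : ℝ)) ω * Z (n + 1) ω)
    (n : ℕ) :
    ∫ ω, Set.indicator (rareEvent V Y ζ t (n + 1)) (fun _ => (1 : ℝ)) ω * V (Y (n + 1) ω) ∂P
      ≤ Real.exp (ρ * (t (n + 1) - t n))
          * ∫ ω, Set.indicator (rareEvent V Y ζ t n) (fun _ => (1 : ℝ)) ω * V (Y n ω) ∂P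
        + ∫ ω, Set.indicator (rareEvent V Y ζ t (n + 1)) (fun _ => (1 : ℝ)) ω
            * Z (n + 1) ω ∂P := by
  have hintV := integrable_indicator_mul_lyapunov hV hVnn hY hint0 hZint hLyap
  have hmeasZ : Measurable fun ω =>
      Set.indicator (rareEvent V Y ζ t (n + 1)) (fun _ => (1 : ℝ)) ω * Z (n + 1) ω :=
    (measurable_const.indicator (measurableSet_rareEvent hV hY _)).mul (hZ _)
  have hintZ : Integrable
      (fun ω => Set.indicator (rareEvent V Y ζ t (n + 1)) (fun _ => (1 : ℝ)) ω * Z (n + 1) ω) P :=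
    (hZint (n + 1) n.succ_pos).mono' hmeasZ.aestronglyMeasurable (.of_forall fun ω => by
      rw [norm_mul, Real.norm_eq_abs, Real.norm_eq_abs, abs_of_nonneg (indicator_one_nonneg _ ω)])
  rw [← integral_const_mul, ← integral_add ((hintV n).const_mul _) hintZ]
  exact integral_mono (hintV (n + 1)) (((hintV n).const_mul _).add hintZ)
    fun ω => indicator_mul_lyapunov_succ_le hVnn (hLyap n ω)

end Lyapunov

/-- The convention `a / ∞ = 0` is realized by `(ζ s).toReal = 0` for `ζ s = ∞` and `a / 0 = 0`
in `ℝ`. -/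
theorem stmt1_general {Ω E : Type*} [MeasurableSpace Ω] [MeasurableSpace E]
    (P : Measure Ω) [IsProbabilityMeasure P]
    (ρ : ℝ) (t : ℕ → ℝ)
    (ζ : ℝ → ℝ≥0∞) (hζ : ∀ s, 0 < ζ s)
    (V : E → ℝ) (hV : Measurable V) (hVnn : ∀ e, 0 ≤ V e)
    (Y : ℕ → Ω → E) (hY : ∀ n, Measurable (Y n))
    (Z : ℕ → Ω → ℝ) (hZ : ∀ n, Measurable (Z n))
    (hint0 : Integrable (fun ω => V (Y 0 ω)) P)
    (hZint : ∀ n, 1 ≤ n →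
      Integrable
        (fun ω => Set.indicator (rareEvent V Y ζ t n) (fun _ => (1 : ℝ)) ω * |Z n ω|) P)
    (hLyap : ∀ n ω,
      Set.indicator (rareEvent V Y ζ t (n + 1)) (fun _ => (1 : ℝ)) ω * V (Y (n + 1) ω)
        ≤ Real.exp (ρ * (t (n + 1) - t n)) * V (Y n ω)
          + Set.indicator (rareEvent V Y ζ t (n + 1)) (fun _ => (1 : ℝ)) ω * Z (n + 1) ω) :
    ∀ n : ℕ,
      (P ((rareEvent V Y ζ t n)ᶜ)).toReal
        ≤ ∑ k ∈ Finset.range n,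
            (Real.exp (ρ * (t k - t 0)) * ∫ ω, V (Y 0 ω) ∂P
              + ∑ l ∈ Finset.Icc 1 k,
                  Real.exp (ρ * (t k - t l))
                    * ∫ ω, Set.indicator (rareEvent V Y ζ t l) (fun _ => (1 : ℝ)) ω * Z l ω ∂P)
            / (ζ (t (k + 1) - t k)).toReal := by
  intro n
  have hint := integrable_indicator_mul_lyapunov hV hVnn hY hint0 hZint hLyap
  have hgronwall := le_exp_mul_add_sum_of_succ_le
    (u := fun k =>
      ∫ ω, Set.indicator (rareEvent V Y ζ t k) (fun _ => (1 : ℝ)) ω * V (Y k ω) ∂P)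
    (b := fun l => ∫ ω, Set.indicator (rareEvent V Y ζ t l) (fun _ => (1 : ℝ)) ω * Z l ω ∂P)
    (integral_indicator_mul_lyapunov_succ_le hV hVnn hY hZ hint0 hZint hLyap)
  calc (P (rareEvent V Y ζ t n)ᶜ).toReal
      ≤ ∑ k ∈ Finset.range n, P.real (rareEvent V Y ζ t k \ rareEvent V Y ζ t (k + 1)) :=
        measureReal_compl_le_sum_diff P rareEvent_zero n
    _ ≤ ∑ k ∈ Finset.range n,
          (∫ ω, Set.indicator (rareEvent V Y ζ t k) (fun _ => (1 : ℝ)) ω * V (Y k ω) ∂P)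
            / (ζ (t (k + 1) - t k)).toReal :=
        Finset.sum_le_sum fun k _ => measureReal_le_integral_div_toReal
          (fun ω => mul_nonneg (indicator_one_nonneg _ ω) (hVnn _)) (hint k) (hζ _).ne'
          fun ω hω => by
            simpa [Set.indicator_of_mem hω.1] using lt_of_mem_rareEvent_diff_succ hω
    _ ≤ _ := Finset.sum_le_sum fun k _ => by
        gcongr
        simpa using hgronwall k

/-- Probability bound for the complement of the rare events
(with the convention `a / ∞ = 0`, realized here via `(ζ s).toReal = 0` for `ζ s = ∞`
and `a / 0 = 0` in `ℝ`). -/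
theorem stmt1 {Ω E : Type*} [MeasurableSpace Ω] [MeasurableSpace E]
    (P : Measure Ω) [IsProbabilityMeasure P]
    (ρ : ℝ) (t : ℕ → ℝ) (ht : Monotone t)
    (ζ : ℝ → ℝ≥0∞) (hζ : ∀ s, 0 < ζ s)
    (V : E → ℝ) (hV : Measurable V) (hVnn : ∀ e, 0 ≤ V e)
    (Y : ℕ → Ω → E) (hY : ∀ n, Measurable (Y n))
    (Z : ℕ → Ω → ℝ) (hZ : ∀ n, Measurable (Z n))
    (hint0 : Integrable (fun ω => V (Y 0 ω)) P)
    (hZint : ∀ n, 1 ≤ n →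
      Integrable
        (fun ω => Set.indicator (rareEvent V Y ζ t n) (fun _ => (1 : ℝ)) ω * |Z n ω|) P)
    (hLyap : ∀ n ω,
      Set.indicator (rareEvent V Y ζ t (n + 1)) (fun _ => (1 : ℝ)) ω * V (Y (n + 1) ω)
        ≤ Real.exp (ρ * (t (n + 1) - t n)) * V (Y n ω)
          + Set.indicator (rareEvent V Y ζ t (n + 1)) (fun _ => (1 : ℝ)) ω * Z (n + 1) ω) :
    ∀ n : ℕ,
      (P ((rareEvent V Y ζ t n)ᶜ)).toReal
        ≤ ∑ k ∈ Finset.range n,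
            (Real.exp (ρ * (t k - t 0)) * ∫ ω, V (Y 0 ω) ∂P
              + ∑ l ∈ Finset.Icc 1 k,
                  Real.exp (ρ * (t k - t l))
                    * ∫ ω, Set.indicator (rareEvent V Y ζ t l) (fun _ => (1 : ℝ)) ω * Z l ω ∂P)
            / (ζ (t (k + 1) - t k)).toReal :=
  stmt1_general P ρ t ζ hζ V hV hVnn Y hY Z hZ hint0 hZint hLyap
end

section
/- Let c, p ∈ [1,∞), let d ∈ ℕ, and let V : ℝ^d → ℝ be a continuously differentiable function satisfying ‖(∇V)(x)‖ ≤ c |V(x)|^{1 - 1/p} for Lebesgue-almost all x ∈ ℝ^d. Then V(x + y) ≤ c^p 2^{p-1} (|V(x)| + ‖y‖^p) for all x, y ∈ ℝ^d. -/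
open MeasureTheory Filter Topology

/-!
Formally `‖∇(|V|^{1/p})‖ = p⁻¹ |V|^{1/p - 1} ‖∇V‖ ≤ c / p`, so `|V|^{1/p}` is `c / p`-Lipschitz
and `|V(x + y)| ≤ (|V x|^{1/p} + c ‖y‖ / p)^p`; convexity of `t ↦ t^p` then gives the bound.
Since `|V|^{1/p}` need not be differentiable where `V` vanishes, the mean value inequality is
applied to the smooth regularisations `(V² + ε)^{1/(2p)}` and `ε → 0⁺` is taken afterwards.
The almost-everywhere gradient bound holds everywhere because both of its sides are continuous.
-/

theorem Continuous.le_of_ae_le {X Y : Type*} [TopologicalSpace X] [MeasurableSpace X]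
    {μ : Measure X} [μ.IsOpenPosMeasure] [TopologicalSpace Y] [Preorder Y]
    [OrderClosedTopology Y] {u w : X → Y} (hu : Continuous u) (hw : Continuous w)
    (h : ∀ᵐ x ∂μ, u x ≤ w x) (x : X) : u x ≤ w x :=
  (isClosed_le hu hw).closure_subset_iff.2 subset_rfl
    ((Measure.dense_of_ae h).closure_eq ▸ Set.mem_univ x)

theorem Real.rpow_add_le_mul_rpow_add_rpow {a b p : ℝ} (ha : 0 ≤ a) (hb : 0 ≤ b) (hp : 1 ≤ p) :
    (a + b) ^ p ≤ 2 ^ (p - 1) * (a ^ p + b ^ p) := by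
  lift a to NNReal using ha
  lift b to NNReal using hb
  exact_mod_cast NNReal.rpow_add_le_mul_rpow_add_rpow a b hp

theorem abs_rpow_le_sq_add_rpow {p ε : ℝ} (hp : 1 ≤ p) (hε : 0 ≤ ε) (a : ℝ) :
    |a| ^ (2 - 1 / p) ≤ (a ^ 2 + ε) ^ (1 - 1 / (2 * p)) := by
  have hp0 : 0 < p := by linarith
  have hexp : 0 ≤ 1 - 1 / (2 * p) := by
    rw [sub_nonneg, div_le_one (by positivity)]; linarith
  calc |a| ^ (2 - 1 / p) = (|a| ^ 2) ^ (1 - 1 / (2 * p)) := by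
        rw [← Real.rpow_natCast, ← Real.rpow_mul (abs_nonneg a)]
        congr 1; field_simp; ring
    _ ≤ (a ^ 2 + ε) ^ (1 - 1 / (2 * p)) := by
        rw [sq_abs]; gcongr; linarith

theorem sq_add_rpow_deriv_le {p ε L a b : ℝ} (hp : 1 ≤ p) (hε : 0 < ε) (hL : 0 ≤ L)
    (hb : b ≤ L * |a| ^ (1 - 1 / p)) :
    1 / (2 * p) * (a ^ 2 + ε) ^ (1 / (2 * p) - 1) * (2 * |a|) * b ≤ L / p := by
  have hp0 : 0 < p := by linarith
  have hq : 0 < a ^ 2 + ε := by positivity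
  have hinv : 1 / p ≤ 1 := (div_le_one hp0).2 hp
  have hab : |a| * b ≤ L * (a ^ 2 + ε) ^ (1 - 1 / (2 * p)) := calc
    |a| * b ≤ |a| * (L * |a| ^ (1 - 1 / p)) := by gcongr
    _ = L * |a| ^ (2 - 1 / p) := by
        rw [show (2 : ℝ) - 1 / p = 1 + (1 - 1 / p) by ring,
          Real.rpow_add' (abs_nonneg a) (by linarith), Real.rpow_one]
        ring
    _ ≤ L * (a ^ 2 + ε) ^ (1 - 1 / (2 * p)) := by gcongr; exact abs_rpow_le_sq_add_rpow hp hε.le a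
  calc 1 / (2 * p) * (a ^ 2 + ε) ^ (1 / (2 * p) - 1) * (2 * |a|) * b
      = 1 / p * (a ^ 2 + ε) ^ (1 / (2 * p) - 1) * (|a| * b) := by ring
    _ ≤ 1 / p * (a ^ 2 + ε) ^ (1 / (2 * p) - 1) * (L * (a ^ 2 + ε) ^ (1 - 1 / (2 * p))) := by
        gcongr
    _ = L / p * ((a ^ 2 + ε) ^ (1 / (2 * p) - 1) * (a ^ 2 + ε) ^ (1 - 1 / (2 * p))) := by ring
    _ = L / p := by rw [← Real.rpow_add hq]; simp

section

variable {E : Type*} [NormedAddCommGroup E] [NormedSpace ℝ E] {f : E → ℝ}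
  {f' : E → E →L[ℝ] ℝ} {L p : ℝ}

theorem sq_add_rpow_le_of_norm_fderiv_le (hp : 1 ≤ p) (hL : 0 ≤ L)
    (hf : ∀ x, HasFDerivAt f (f' x) x) (hbound : ∀ x, ‖f' x‖ ≤ L * |f x| ^ (1 - 1 / p))
    {ε : ℝ} (hε : 0 < ε) (x y : E) :
    (f y ^ 2 + ε) ^ (1 / (2 * p)) ≤ (f x ^ 2 + ε) ^ (1 / (2 * p)) + L / p * ‖y - x‖ := by
  have hderiv : ∀ z, HasFDerivAt (fun z => (f z ^ 2 + ε) ^ (1 / (2 * p)))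
      ((1 / (2 * p) * (f z ^ 2 + ε) ^ (1 / (2 * p) - 1)) • (2 * f z) • f' z) z := fun z => by
    simpa using (((hf z).pow 2).add_const ε).rpow_const (Or.inl (by positivity))
  have hnorm : ∀ z, ‖(1 / (2 * p) * (f z ^ 2 + ε) ^ (1 / (2 * p) - 1)) • (2 * f z) • f' z‖
      ≤ L / p := fun z => by
    rw [norm_smul, norm_smul, Real.norm_of_nonneg (by positivity), Real.norm_eq_abs, abs_mul,
      abs_two, ← mul_assoc]
    exact sq_add_rpow_deriv_le hp hε hL (hbound z)
  have hmvt := convex_univ.norm_image_sub_le_of_norm_hasFDerivWithin_le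
    (fun z _ => (hderiv z).hasFDerivWithinAt) (fun z _ => hnorm z) (Set.mem_univ x)
    (Set.mem_univ y)
  rw [Real.norm_eq_abs] at hmvt
  linarith [le_abs_self ((f y ^ 2 + ε) ^ (1 / (2 * p)) - (f x ^ 2 + ε) ^ (1 / (2 * p)))]

theorem tendsto_sq_add_rpow_nhdsGT_zero {s : ℝ} (hs : 0 < s) (a : ℝ) :
    Tendsto (fun ε : ℝ => (a ^ 2 + ε) ^ s) (𝓝[>] 0) (𝓝 (|a| ^ (2 * s))) := by
  have hcont : ContinuousAt (fun ε : ℝ => (a ^ 2 + ε) ^ s) 0 :=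
    (continuousAt_const.add continuousAt_id).rpow_const (Or.inr hs.le)
  have h0 : (a ^ 2 + 0) ^ s = |a| ^ (2 * s) := by
    rw [add_zero, ← sq_abs, Real.rpow_mul (abs_nonneg a)]; norm_cast
  exact h0 ▸ hcont.tendsto.mono_left nhdsWithin_le_nhds

theorem abs_rpow_one_div_le_of_norm_fderiv_le (hp : 1 ≤ p) (hL : 0 ≤ L)
    (hf : ∀ x, HasFDerivAt f (f' x) x) (hbound : ∀ x, ‖f' x‖ ≤ L * |f x| ^ (1 - 1 / p))
    (x y : E) : |f y| ^ (1 / p) ≤ |f x| ^ (1 / p) + L / p * ‖y - x‖ := by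
  have hs : 0 < 1 / (2 * p) := by positivity
  have h2s : 2 * (1 / (2 * p)) = 1 / p := by field_simp
  rw [← h2s]
  exact le_of_tendsto_of_tendsto (tendsto_sq_add_rpow_nhdsGT_zero hs (f y))
    ((tendsto_sq_add_rpow_nhdsGT_zero hs (f x)).add_const _)
    (eventually_mem_nhdsWithin.mono fun ε hε =>
      sq_add_rpow_le_of_norm_fderiv_le hp hL hf hbound hε x y)

end

/-- Growth estimate for a `C¹` Lyapunov-type function whose gradient satisfies
`‖∇V(x)‖ ≤ c |V(x)|^{1-1/p}` for Lebesgue-almost all `x`. -/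
theorem stmt7 {d : ℕ} (c p : ℝ) (hc : 1 ≤ c) (hp : 1 ≤ p)
    (V : EuclideanSpace ℝ (Fin d) → ℝ) (hV : ContDiff ℝ 1 V)
    (hgrad : ∀ᵐ x ∂(volume : Measure (EuclideanSpace ℝ (Fin d))),
      ‖fderiv ℝ V x‖ ≤ c * |V x| ^ (1 - 1 / p)) :
    ∀ x y : EuclideanSpace ℝ (Fin d),
      V (x + y) ≤ c ^ p * 2 ^ (p - 1) * (|V x| + ‖y‖ ^ p) := by
  have hp0 : 0 < p := by linarith
  have hbound : ∀ z, ‖fderiv ℝ V z‖ ≤ c * |V z| ^ (1 - 1 / p) :=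
    (hV.continuous_fderiv one_ne_zero).norm.le_of_ae_le
      (continuous_const.mul (hV.continuous.abs.rpow_const fun _ =>
        Or.inr (sub_nonneg.2 ((div_le_one hp0).2 hp)))) hgrad
  intro x y
  have hgrowth := abs_rpow_one_div_le_of_norm_fderiv_le hp (by linarith)
    (fun z => (hV.differentiable one_ne_zero z).hasFDerivAt) hbound x (x + y)
  rw [add_sub_cancel_left] at hgrowth
  have hcp : 1 ≤ c ^ p := Real.one_le_rpow hc hp0.le
  have hcdiv : (c / p) ^ p ≤ c ^ p :=
    Real.rpow_le_rpow (by positivity) (div_le_self (by linarith) hp) hp0.le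
  calc V (x + y) ≤ |V (x + y)| := le_abs_self _
    _ = (|V (x + y)| ^ (1 / p)) ^ p := by
        rw [← Real.rpow_mul (abs_nonneg _), one_div_mul_cancel hp0.ne', Real.rpow_one]
    _ ≤ (|V x| ^ (1 / p) + c / p * ‖y‖) ^ p := by gcongr
    _ ≤ 2 ^ (p - 1) * ((|V x| ^ (1 / p)) ^ p + (c / p * ‖y‖) ^ p) :=
        Real.rpow_add_le_mul_rpow_add_rpow (by positivity) (by positivity) hp
    _ = 2 ^ (p - 1) * (|V x| + (c / p) ^ p * ‖y‖ ^ p) := by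
        rw [← Real.rpow_mul (abs_nonneg _), one_div_mul_cancel hp0.ne', Real.rpow_one,
          Real.mul_rpow (by positivity) (norm_nonneg y)]
    _ ≤ 2 ^ (p - 1) * (c ^ p * (|V x| + ‖y‖ ^ p)) := by
        gcongr
        nlinarith [abs_nonneg (V x), Real.rpow_nonneg (norm_nonneg y) p]
    _ = c ^ p * 2 ^ (p - 1) * (|V x| + ‖y‖ ^ p) := by ring
end
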